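/- Let I be a linear order and let m, n be natural numbers. Let h : Fin m → ℕ → I be a family of functions each of which is monotone on the initial segment {0, 1, ..., 2*m*n + 2}, i.e. for each k : Fin m, whenever p ≤ q ≤ 2*m*n + 2 one has h k p ≤ h k q. Let a : Fin n → I be a tuple of elements of I. Then there exists p ≤ 2*m*n + 1 such that for every k : Fin m and every j : Fin n, compare (h k p) (a j) = compare (h k (p+1)) (a j); in other words, the tuples (h k p)_{k} and (h k (p+1))_{k} have the same order type over (a j)_{j}. -/

import Mathlib

/-!
Rank each comparison `lt < eq < gt` as `0 < 1 < 2`. Along monotone sequences every rank is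
monotone, so the total rank over all `m * n` pairs `(k, j)` is monotone in `p` and bounded by
`2 * m * n`. It increases strictly at every step where some comparison changes, hence it cannot
do so at each of the first `2 * m * n + 2` steps.
-/

namespace Ordering

def rank : Ordering → ℕ
  | .lt => 0
  | .eq => 1
  | .gt => 2

lemma rank_le_two (o : Ordering) : o.rank ≤ 2 := by
  cases o <;> simp [rank]

lemma rank_injective : Function.Injective rank := by
  intro o₁ o₂ h
  cases o₁ <;> cases o₂ <;> simp_all [rank]

end Ordering

lemma rank_compare_le_rank_compare {I : Type*} [LinearOrder I] {x y : I} (hxy : x ≤ y) (a : I) :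
    (compare x a).rank ≤ (compare y a).rank := by
  rcases lt_trichotomy x a with hx | rfl | hx
  · rw [compare_lt_iff_lt.mpr hx]
    exact Nat.zero_le _
  · have hyx : compare y x ≠ .lt := compare_ge_iff_ge.mpr hxy
    rw [compare_eq_iff_eq.mpr rfl]
    generalize compare y x = o at hyx ⊢
    cases o <;> simp_all [Ordering.rank]
  · rw [compare_gt_iff_gt.mpr hx, compare_gt_iff_gt.mpr (hx.trans_le hxy)]

lemma exists_eq_succ_of_monotoneOn_of_strictMono_lt {α : Type*} [PartialOrder α] {f : ℕ → α}
    {N : ℕ} (hf : MonotoneOn f (Set.Iic N)) {φ : α → ℕ} (hφ : StrictMono φ)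
    (hbound : φ (f N) < N) : ∃ p < N, f p = f (p + 1) := by
  by_contra! hne
  have hstrict : StrictMonoOn (φ ∘ f) (Set.Iic N) := by
    refine strictMonoOn_Iic_of_lt_succ fun p hp => hφ ?_
    exact (hf (Set.mem_Iic.mpr hp.le) (Set.mem_Iic.mpr hp) (Nat.le_succ p)).lt_of_ne (hne p hp)
  exact (hstrict.Iic_id_le N le_rfl).not_gt hbound

lemma exists_compare_eq_compare_succ {I ι : Type*} [LinearOrder I] [Fintype ι]
    (g : ι → ℕ → I) (b : ι → I) {N : ℕ} (hN : 2 * Fintype.card ι < N)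
    (hg : ∀ i, MonotoneOn (g i) (Set.Iic N)) :
    ∃ p < N, ∀ i, compare (g i p) (b i) = compare (g i (p + 1)) (b i) := by
  let ranks : ℕ → ι → ℕ := fun p i => (compare (g i p) (b i)).rank
  have hmono : MonotoneOn ranks (Set.Iic N) :=
    fun p hp q hq hpq i => rank_compare_le_rank_compare (hg i hp hq hpq) (b i)
  have hbound : ∑ i, ranks N i < N := by
    calc ∑ i, ranks N i ≤ ∑ _i : ι, 2 := Finset.sum_le_sum fun i _ => Ordering.rank_le_two _
      _ = 2 * Fintype.card ι := by simp [mul_comm]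
      _ < N := hN
  obtain ⟨p, hp, heq⟩ :=
    exists_eq_succ_of_monotoneOn_of_strictMono_lt hmono Fintype.sum_strictMono hbound
  exact ⟨p, hp, fun i => Ordering.rank_injective (congrFun heq i)⟩

theorem stmt_6 {I : Type*} [LinearOrder I] (m n : ℕ)
    (h : Fin m → ℕ → I)
    (hmono : ∀ k : Fin m, ∀ p q : ℕ, p ≤ q → q ≤ 2 * m * n + 2 → h k p ≤ h k q)
    (a : Fin n → I) :
    ∃ p : ℕ, p ≤ 2 * m * n + 1 ∧
      ∀ (k : Fin m) (j : Fin n),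
        compare (h k p) (a j) = compare (h k (p + 1)) (a j) := by
  have hN : 2 * Fintype.card (Fin m × Fin n) < 2 * m * n + 2 := by
    simp only [Fintype.card_prod, Fintype.card_fin]
    lia
  obtain ⟨p, hp, hcmp⟩ := exists_compare_eq_compare_succ (fun i => h i.1) (fun i => a i.2) hN
    fun i _ _ q hq hpq => hmono i.1 _ q hpq hq
  exact ⟨p, by lia, fun k j => hcmp (k, j)⟩
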